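/- (Lemma `lemma.empty.2`) Assume in addition that γ₁ ∈ (0,1) with γ₁ ≥ 2γ and that τ ≥ τ₁ > 1. Let σ ∈ {+1,−1}, ℓ ∈ ℤ^ν and n, n' ∈ ℕ₀ with (ℓ, n + σn') ≠ (0, 0), and suppose ⟨min{n,n'}⟩^α · ⟨n + σn'⟩^α ≥ 8·max{ m̄, C₀(γ₀M)^{−1} }·(M^α/γ₁)·⟨ℓ⟩^{τ₁}. Then every ω ∈ Ω₀ satisfying the first-order Melnikov conditions |ω·ℓ' + j| ≥ γ₁·⟨ℓ'⟩^{−τ₁}·⟨j⟩^α·M^{−α} for all (ℓ', j) ∈ (ℤ^ν × ℤ) \ {(0,0)} also satisfies |ω·ℓ + μ_n(ω) + σ·μ'_{n'}(ω)| ≥ γ·⟨ℓ⟩^{−τ}·⟨n + σn'⟩^α·M^{−α}. -/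

import Mathlib

noncomputable section

open MeasureTheory

/-- The closed annulus `R_M = {ω ∈ ℝ^ν : M ≤ |ω| ≤ 2M}`. -/
def RM (ν : ℕ) (M : ℝ) : Set (EuclideanSpace ℝ (Fin ν)) :=
  {ω | M ≤ ‖ω‖ ∧ ‖ω‖ ≤ 2 * M}

/-- Euclidean norm of an integer vector `ℓ ∈ ℤ^ν`. -/
def znorm {ν : ℕ} (ℓ : Fin ν → ℤ) : ℝ := Real.sqrt (∑ i, ((ℓ i : ℝ)) ^ 2)

/-- The inner product `ω·ℓ`. -/
def dotZ {ν : ℕ} (ω : EuclideanSpace ℝ (Fin ν)) (ℓ : Fin ν → ℤ) : ℝ :=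
  ∑ i, ω i * (ℓ i : ℝ)

/-- Japanese bracket of a real number, `⟨x⟩ = max {1, |x|}`. -/
def japR (x : ℝ) : ℝ := max 1 |x|

/-- Japanese bracket of an integer vector, `⟨ℓ⟩ = max {1, |ℓ|}`. -/
def japZv {ν : ℕ} (ℓ : Fin ν → ℤ) : ℝ := max 1 (znorm ℓ)

/-- The Diophantine set `Ω₀ = {ω ∈ R_M : |ω·ℓ| ≥ γ₀ M ⟨ℓ⟩^{−τ₀} ∀ ℓ ≠ 0}`. -/
def dioph (ν : ℕ) (M γ₀ τ₀ : ℝ) : Set (EuclideanSpace ℝ (Fin ν)) :=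
  {ω ∈ RM ν M | ∀ ℓ : Fin ν → ℤ, ℓ ≠ 0 → γ₀ * M * japZv ℓ ^ (-τ₀) ≤ |dotZ ω ℓ|}

end

/-!
Since `n + σn'` is an integer `j`, the first-order Melnikov condition gives
`|ω·ℓ + j| ≥ γ₁⟨ℓ⟩^{-τ₁}⟨j⟩^α M^{-α}`. With `K = max{m̄, C₀(γ₀M)^{-1}}` and `m = ⟨min{n,n'}⟩`,
each of `μ_n`, `μ'_{n'}` lies within `2K m^{-α}` of `n`, resp. `n'` (using `⟨n⟩^{-1} ≤ ⟨n⟩^{-α}`),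
and the hypothesis on the indices says precisely that the total error `4K m^{-α}` is at most half
of the Melnikov bound. What is left, `(γ₁/2)⟨ℓ⟩^{-τ₁}⟨j⟩^α M^{-α}`, dominates
`γ⟨ℓ⟩^{-τ}⟨j⟩^α M^{-α}` because `γ ≤ γ₁/2` and `τ₁ ≤ τ`.
-/

theorem exists_intCast_eq_add_mul {σ : ℝ} (hσ : σ = 1 ∨ σ = -1) (n n' : ℕ) :
    ∃ j : ℤ, (j : ℝ) = n + σ * n' := by
  rcases hσ with rfl | rfl
  · exact ⟨n + n', by push_cast; ring⟩
  · exact ⟨n - n', by push_cast; ring⟩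

theorem abs_le_div_of_abs_le_div_of_le {x c K b d : ℝ} (hx : |x| ≤ c / b) (hd : 0 < d)
    (hdb : d ≤ b) (hcK : c ≤ K) : |x| ≤ K / d := by
  have hb : 0 < b := hd.trans_le hdb
  have hc : 0 ≤ c := by
    simpa [div_mul_cancel₀ c hb.ne'] using mul_nonneg ((abs_nonneg x).trans hx) hb.le
  calc |x| ≤ c / b := hx
    _ ≤ c / d := div_le_div_of_nonneg_left hc hd hdb
    _ ≤ K / d := by gcongr

theorem abs_sub_le_two_mul_max_div_rpow {μ lam x mbar c m α : ℝ}
    (hlam : |lam - x| ≤ mbar / max 1 x) (hμ : |μ - lam| ≤ c / max 1 x ^ α)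
    (hm : 1 ≤ m) (hmx : m ≤ max 1 x) (hα0 : 0 ≤ α) (hα1 : α ≤ 1) :
    |μ - x| ≤ 2 * (max mbar c / m ^ α) := by
  have hmα : 0 < m ^ α := Real.rpow_pos_of_pos (zero_lt_one.trans_le hm) α
  have hmxα : m ^ α ≤ max 1 x ^ α := by gcongr
  have hxα : max 1 x ^ α ≤ max 1 x := Real.rpow_le_self_of_one_le (le_max_left _ _) hα1
  have h₁ := abs_le_div_of_abs_le_div_of_le hμ hmα hmxα (le_max_right mbar c)
  have h₂ := abs_le_div_of_abs_le_div_of_le hlam hmα (hmxα.trans hxα) (le_max_left mbar c)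
  calc |μ - x| ≤ |μ - lam| + |lam - x| := abs_sub_le _ _ _
    _ ≤ 2 * (max mbar c / m ^ α) := by linarith

theorem abs_add_mul_sub_add_mul_le {σ x x' y y' ε : ℝ} (hσ : |σ| = 1) (h : |x - y| ≤ ε)
    (h' : |x' - y'| ≤ ε) : |(x + σ * x') - (y + σ * y')| ≤ 2 * ε := by
  calc |(x + σ * x') - (y + σ * y')| = |(x - y) + σ * (x' - y')| := by ring_nf
    _ ≤ |x - y| + |σ * (x' - y')| := abs_add_le _ _
    _ = |x - y| + |x' - y'| := by rw [abs_mul, hσ, one_mul]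
    _ ≤ 2 * ε := by linarith

theorem sub_le_abs_add_of_le_abs_add {a e u v w : ℝ} (h : a ≤ |u + v|) (hwv : |w - v| ≤ e) :
    a - e ≤ |u + w| := by
  have := abs_sub_abs_le_abs_sub (u + v) (v - w)
  rw [abs_sub_comm v w, show u + v - (v - w) = u + w by ring] at this
  linarith

theorem four_mul_div_le_of_le_mul {K γ₁ A B m J : ℝ} (hγ₁ : 0 < γ₁) (hA : 0 < A) (hB : 0 < B)
    (hm : 0 < m) (h : 8 * K * (A / γ₁) * B ≤ m * J) :
    4 * (K / m) ≤ γ₁ / 2 * B⁻¹ * J * A⁻¹ := by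
  calc 4 * (K / m) = 8 * K * (A / γ₁) * B * (γ₁ / (2 * A * B)) / m := by field_simp; ring
    _ ≤ m * J * (γ₁ / (2 * A * B)) / m := by gcongr
    _ = γ₁ / 2 * B⁻¹ * J * A⁻¹ := by field_simp

theorem lemma_empty_2_general
    (ν : ℕ) (M : ℝ) (hM : 1 ≤ M)
    (α γ γ₀ τ₀ τ : ℝ) (hα : 0 < α) (hα1 : α < 1)
    (mbar C₀ : ℝ)
    (lam : ℕ → ℝ) (hlam : ∀ n : ℕ, |lam n - (n : ℝ)| ≤ mbar / max 1 (n : ℝ))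
    (μ μ' : ℕ → EuclideanSpace ℝ (Fin ν) → ℝ)
    (hμ : ∀ n : ℕ, ∀ ω ∈ RM ν M,
      |μ n ω - lam n| ≤ C₀ / (γ₀ * M) / (max 1 (n : ℝ)) ^ α)
    (hμ' : ∀ n : ℕ, ∀ ω ∈ RM ν M,
      |μ' n ω - lam n| ≤ C₀ / (γ₀ * M) / (max 1 (n : ℝ)) ^ α)
    (γ₁ τ₁ : ℝ) (hγ₁ : 0 < γ₁) (hγγ₁ : 2 * γ ≤ γ₁)
    (hττ₁ : τ₁ ≤ τ)
    (σ : ℝ) (hσ : σ = 1 ∨ σ = -1)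
    (ℓ : Fin ν → ℤ) (n n' : ℕ)
    (hnontriv : ¬(ℓ = 0 ∧ (n : ℝ) + σ * (n' : ℝ) = 0))
    (hcond : 8 * max mbar (C₀ / (γ₀ * M)) * (M ^ α / γ₁) * japZv ℓ ^ τ₁ ≤
      (max 1 ((min n n' : ℕ) : ℝ)) ^ α * japR ((n : ℝ) + σ * (n' : ℝ)) ^ α)
    (ω : EuclideanSpace ℝ (Fin ν)) (hω : ω ∈ dioph ν M γ₀ τ₀)
    (hmel1 : ∀ (ℓ' : Fin ν → ℤ) (j : ℤ), ¬(ℓ' = 0 ∧ j = 0) →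
      γ₁ * japZv ℓ' ^ (-τ₁) * japR (j : ℝ) ^ α * M ^ (-α) ≤ |dotZ ω ℓ' + (j : ℝ)|) :
    γ * japZv ℓ ^ (-τ) * japR ((n : ℝ) + σ * (n' : ℝ)) ^ α * M ^ (-α) ≤
      |dotZ ω ℓ + μ n ω + σ * μ' n' ω| := by
  set m := max 1 ((min n n' : ℕ) : ℝ)
  set K := max mbar (C₀ / (γ₀ * M))
  have hM0 : 0 < M := zero_lt_one.trans_le hM
  have hL : 1 ≤ japZv ℓ := le_max_left _ _
  have hJ : 0 ≤ japR (n + σ * n') ^ α := Real.rpow_nonneg (zero_le_one.trans (le_max_left _ _)) α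
  obtain ⟨j, hj⟩ := exists_intCast_eq_add_mul hσ n n'
  have hmel := hmel1 ℓ j fun ⟨hℓ, hj0⟩ ↦ hnontriv ⟨hℓ, by rw [← hj, hj0, Int.cast_zero]⟩
  rw [hj] at hmel
  have herror (k : ℕ) (hk : min n n' ≤ k) (f : ℕ → EuclideanSpace ℝ (Fin ν) → ℝ)
      (hf : |f k ω - lam k| ≤ C₀ / (γ₀ * M) / max 1 (k : ℝ) ^ α) :
      |f k ω - k| ≤ 2 * (K / m ^ α) :=
    abs_sub_le_two_mul_max_div_rpow (hlam k) hf (le_max_left _ _)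
      (max_le_max le_rfl (by exact_mod_cast hk)) hα.le hα1.le
  have hσ1 : |σ| = 1 := by rcases hσ with rfl | rfl <;> simp
  have hpert := abs_add_mul_sub_add_mul_le hσ1 (herror n (min_le_left n n') μ (hμ n ω hω.1))
    (herror n' (min_le_right n n') μ' (hμ' n' ω hω.1))
  have hsmall : 4 * (K / m ^ α) ≤ γ₁ / 2 * japZv ℓ ^ (-τ₁) * japR (n + σ * n') ^ α * M ^ (-α) := by
    rw [Real.rpow_neg (by positivity), Real.rpow_neg hM0.le]
    exact four_mul_div_le_of_le_mul hγ₁ (by positivity) (by positivity) (by positivity) hcond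
  have hweaken : γ * japZv ℓ ^ (-τ) ≤ γ₁ / 2 * japZv ℓ ^ (-τ₁) :=
    mul_le_mul (by linarith) (Real.rpow_le_rpow_of_exponent_le hL (neg_le_neg hττ₁))
      (by positivity) (by positivity)
  have hlower := sub_le_abs_add_of_le_abs_add hmel hpert
  rw [← add_assoc] at hlower
  linarith [mul_le_mul_of_nonneg_right (mul_le_mul_of_nonneg_right hweaken hJ)
    (by positivity : 0 ≤ M ^ (-α))]

/-- **Lemma `lemma.empty.2`.** Under the first-order Melnikov conditions, the second-order
balanced Melnikov conditions hold for indices with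
`⟨min{n,n'}⟩^α ⟨n ± n'⟩^α ≥ 8 max{m̄, C₀(γ₀M)^{−1}} (M^α/γ₁) ⟨ℓ⟩^{τ₁}`. -/
theorem lemma_empty_2
    (ν : ℕ) (hν : 1 ≤ ν) (M : ℝ) (hM : 1 ≤ M)
    (α γ γ₀ τ₀ τ : ℝ) (hα : 0 < α) (hα1 : α < 1) (hγ : 0 < γ) (hγ1 : γ < 1)
    (hγ₀ : 0 < γ₀) (hγ₀1 : γ₀ < 1) (hτ₀ : (ν : ℝ) - 1 < τ₀) (hτ : τ₀ ≤ τ)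
    (mbar C₀ : ℝ) (hmbar : 0 < mbar) (hC₀ : 0 < C₀)
    (lam : ℕ → ℝ) (hlam : ∀ n : ℕ, |lam n - (n : ℝ)| ≤ mbar / max 1 (n : ℝ))
    (μ μ' : ℕ → EuclideanSpace ℝ (Fin ν) → ℝ)
    (hμ : ∀ n : ℕ, ∀ ω ∈ RM ν M,
      |μ n ω - lam n| ≤ C₀ / (γ₀ * M) / (max 1 (n : ℝ)) ^ α)
    (hμ' : ∀ n : ℕ, ∀ ω ∈ RM ν M,
      |μ' n ω - lam n| ≤ C₀ / (γ₀ * M) / (max 1 (n : ℝ)) ^ α)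
    (γ₁ τ₁ : ℝ) (hγ₁ : 0 < γ₁) (hγ₁1 : γ₁ < 1) (hγγ₁ : 2 * γ ≤ γ₁)
    (hτ₁ : 1 < τ₁) (hττ₁ : τ₁ ≤ τ)
    (σ : ℝ) (hσ : σ = 1 ∨ σ = -1)
    (ℓ : Fin ν → ℤ) (n n' : ℕ)
    (hnontriv : ¬(ℓ = 0 ∧ (n : ℝ) + σ * (n' : ℝ) = 0))
    (hcond : 8 * max mbar (C₀ / (γ₀ * M)) * (M ^ α / γ₁) * japZv ℓ ^ τ₁ ≤
      (max 1 ((min n n' : ℕ) : ℝ)) ^ α * japR ((n : ℝ) + σ * (n' : ℝ)) ^ α)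
    (ω : EuclideanSpace ℝ (Fin ν)) (hω : ω ∈ dioph ν M γ₀ τ₀)
    (hmel1 : ∀ (ℓ' : Fin ν → ℤ) (j : ℤ), ¬(ℓ' = 0 ∧ j = 0) →
      γ₁ * japZv ℓ' ^ (-τ₁) * japR (j : ℝ) ^ α * M ^ (-α) ≤ |dotZ ω ℓ' + (j : ℝ)|) :
    γ * japZv ℓ ^ (-τ) * japR ((n : ℝ) + σ * (n' : ℝ)) ^ α * M ^ (-α) ≤
      |dotZ ω ℓ + μ n ω + σ * μ' n' ω| :=
  lemma_empty_2_general ν M hM α γ γ₀ τ₀ τ hα hα1 mbar C₀ lam hlam μ μ' hμ hμ' γ₁ τ₁ hγ₁ hγγ₁ hττ₁ σ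
    hσ ℓ n n' hnontriv hcond ω hω hmel1
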